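/- arXiv:0901.3704 — 2 statements merged into one kernel-verified Lean document; each statement's English description precedes it below -/
import Mathlib

section
/- Let B be a smooth closed 2-form on ℝ^n with components B_{jk} and define Γ_B(x,y,z) := Σ_{j,k} y_j z_k ∫_0^2 ∫_0^1 s B_{jk}(x + (s − st − 1) y + (st − 1) z) dt ds. If each B_{jk} belongs to a translation-invariant closed subalgebra 𝒜 of BC_u(ℝ^n) with moreover all derivatives ∂^a B_{jk} ∈ 𝒜, then for all multi-indices a, b, c and all fixed y, z ∈ ℝ^n, the function x ↦ (∂_x^a ∂_y^b ∂_z^c Γ_B)(x,y,z) belongs to 𝒜. -/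
open scoped BigOperators

noncomputable section

abbrev Vec (n : ℕ) := EuclideanSpace ℝ (Fin n)

noncomputable def pd {E F : Type*} [NormedAddCommGroup E] [NormedSpace ℝ E]
    [NormedAddCommGroup F] [NormedSpace ℝ F] (v : E) (f : E → F) : E → F :=
  fun x => lineDeriv ℝ f x v

noncomputable def mpd {n : ℕ} {E F : Type*} [NormedAddCommGroup E] [NormedSpace ℝ E]
    [NormedAddCommGroup F] [NormedSpace ℝ F] (vs : Fin n → E) (a : Fin n → ℕ)
    (f : E → F) : E → F :=
  (List.finRange n).foldr (fun j g => (pd (vs j))^[a j] g) f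

def exv (n : ℕ) (j : Fin n) : Vec n × Vec n := (EuclideanSpace.single j 1, 0)
def exiv (n : ℕ) (j : Fin n) : Vec n × Vec n := (0, EuclideanSpace.single j 1)

noncomputable def dxdxi {n : ℕ} (a α : Fin n → ℕ) (f : Vec n × Vec n → ℂ) :
    Vec n × Vec n → ℂ :=
  mpd (exv n) a (mpd (exiv n) α f)

noncomputable def jbr {n : ℕ} (ξ : Vec n) : ℝ := Real.sqrt (1 + ‖ξ‖ ^ 2)

def mdeg {n : ℕ} (a : Fin n → ℕ) : ℕ := ∑ j, a j

/-- Hörmander symbol class `S^m_{ρ,δ}`. -/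
def IsHormander (n : ℕ) (m ρ δ : ℝ) (f : Vec n × Vec n → ℂ) : Prop :=
  ContDiff ℝ (⊤ : ℕ∞) f ∧ ∀ a α : Fin n → ℕ, ∃ C : ℝ,
    ∀ p : Vec n × Vec n,
      ‖dxdxi a α f p‖ ≤ C * jbr p.2 ^ (m - ρ * (mdeg α : ℝ) + δ * (mdeg a : ℝ))

/-- The seminorm `σ^{α a}_m`. -/
noncomputable def hseminorm (n : ℕ) (m ρ δ : ℝ) (a α : Fin n → ℕ)
    (f : Vec n × Vec n → ℂ) : ℝ :=
  ⨆ p : Vec n × Vec n,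
    jbr p.2 ^ (-m + ρ * (mdeg α : ℝ) - δ * (mdeg a : ℝ)) * ‖dxdxi a α f p‖

/-- `A` is a unital translation-invariant C*-subalgebra of `BC_u(ℝ^n)`. -/
def IsAdmissible (n : ℕ) (A : Set (Vec n → ℂ)) : Prop :=
  (∀ φ ∈ A, UniformContinuous φ ∧ ∃ C, ∀ x, ‖φ x‖ ≤ C) ∧
  (∀ φ ∈ A, ∀ ψ ∈ A, φ + ψ ∈ A) ∧
  (∀ φ ∈ A, ∀ ψ ∈ A, φ * ψ ∈ A) ∧
  (∀ φ ∈ A, ∀ c : ℂ, c • φ ∈ A) ∧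
  (∀ φ ∈ A, (fun x => starRingEnd ℂ (φ x)) ∈ A) ∧
  ((fun _ => (1 : ℂ)) ∈ A) ∧
  (∀ (g : ℕ → Vec n → ℂ) (ψ : Vec n → ℂ), (∀ k, g k ∈ A) →
    TendstoUniformly g ψ Filter.atTop → ψ ∈ A) ∧
  (∀ φ ∈ A, ∀ x : Vec n, (fun y => φ (y + x)) ∈ A)

/-- Anisotropic symbol class `S^m_{ρ,δ}(ℝ^n*; A^∞)`. -/
def AnisoHormander (n : ℕ) (m ρ δ : ℝ) (A : Set (Vec n → ℂ))
    (f : Vec n × Vec n → ℂ) : Prop :=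
  IsHormander n m ρ δ f ∧
    ∀ (a α : Fin n → ℕ) (ξ : Vec n), (fun x => dxdxi a α f (x, ξ)) ∈ A

def e1v (n : ℕ) (j : Fin n) : Vec n × Vec n × Vec n := (EuclideanSpace.single j 1, 0, 0)
def e2v (n : ℕ) (j : Fin n) : Vec n × Vec n × Vec n := (0, EuclideanSpace.single j 1, 0)
def e3v (n : ℕ) (j : Fin n) : Vec n × Vec n × Vec n := (0, 0, EuclideanSpace.single j 1)

/-- `∂_x^a ∂_y^b ∂_z^c` on functions of three vector variables. -/
noncomputable def dxyz {n : ℕ} (a b c : Fin n → ℕ)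
    (f : Vec n × Vec n × Vec n → ℂ) : Vec n × Vec n × Vec n → ℂ :=
  mpd (e1v n) a (mpd (e2v n) b (mpd (e3v n) c f))

open MeasureTheory

section PdBasic
variable {E F : Type*} [NormedAddCommGroup E] [NormedSpace ℝ E]
  [NormedAddCommGroup F] [NormedSpace ℝ F]

lemma pd_eq_fderiv {f : E → F} {x : E} (v : E) (hf : DifferentiableAt ℝ f x) :
    pd v f x = fderiv ℝ f x v := hf.lineDeriv_eq_fderiv

lemma pd_ofReal (g : E → ℝ) (v : E) (x : E) :
    pd v (fun y => ((g y : ℝ) : ℂ)) x = ((pd v g x : ℝ) : ℂ) := by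
  unfold pd lineDeriv
  set h : ℝ → ℝ := fun t => g (x + t • v) with hh
  show deriv (fun t => ((h t : ℝ) : ℂ)) 0 = ((deriv h 0 : ℝ) : ℂ)
  by_cases H : DifferentiableAt ℝ h 0
  · exact (H.hasDerivAt.ofReal_comp).deriv
  · have H2 : ¬ DifferentiableAt ℝ (fun t => ((h t : ℝ) : ℂ)) 0 := by
      intro hc
      exact H (by simpa [Function.comp_def] using (Complex.reCLM.differentiable.differentiableAt.comp 0 hc))
    rw [deriv_zero_of_not_differentiableAt H, deriv_zero_of_not_differentiableAt H2,
      Complex.ofReal_zero]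

lemma contDiff_pd {f : E → F} (hf : ContDiff ℝ (⊤ : ℕ∞) f) (v : E) :
    ContDiff ℝ (⊤ : ℕ∞) (pd v f) ∧ pd v f = fun x => fderiv ℝ f x v := by
  have hd : Differentiable ℝ f := hf.differentiable (by simp)
  have he : pd v f = fun x => fderiv ℝ f x v := funext fun x => pd_eq_fderiv v (hd x)
  refine ⟨he ▸ ?_, he⟩
  exact (hf.fderiv_right ((by simp))).clm_apply contDiff_const

lemma pd_comm {f : E → F} (hf : ContDiff ℝ (⊤ : ℕ∞) f) (u v : E) :
    pd u (pd v f) = pd v (pd u f) := by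
  have hd : Differentiable ℝ f := hf.differentiable (by simp)
  have hfd : ContDiff ℝ (⊤ : ℕ∞) (fderiv ℝ f) := hf.fderiv_right (by simp)
  have hfdd : Differentiable ℝ (fderiv ℝ f) := hfd.differentiable (by simp)
  have key : ∀ x, ∀ a b : E, fderiv ℝ (fun y => fderiv ℝ f y b) x a
      = fderiv ℝ (fun y => fderiv ℝ f y a) x b := by
    intro x a b
    have h1 : ∀ c : E, fderiv ℝ (fun y => fderiv ℝ f y c) x
        = ((fderiv ℝ (fderiv ℝ f) x).flip c) := by
      intro c
      ext w
      rw [fderiv_clm_apply (hfdd x) (differentiableAt_const c)]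
      simp
    rw [h1 a, h1 b]
    have := second_derivative_symmetric (f' := fderiv ℝ f)
      (f'' := fderiv ℝ (fderiv ℝ f) x) (fun y => (hd y).hasFDerivAt)
      ((hfdd x).hasFDerivAt) a b
    simpa using this
  funext x
  have hdv : Differentiable ℝ (fun y => fderiv ℝ f y v) :=
    (contDiff_pd hf v).2 ▸ (contDiff_pd hf v).1.differentiable (by simp)
  have hdu : Differentiable ℝ (fun y => fderiv ℝ f y u) :=
    (contDiff_pd hf u).2 ▸ (contDiff_pd hf u).1.differentiable (by simp)
  rw [(contDiff_pd hf v).2, (contDiff_pd hf u).2]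
  rw [pd_eq_fderiv u (hdv x), pd_eq_fderiv v (hdu x)]
  exact key x u v

end PdBasic

section PdList
variable {E F : Type*} [NormedAddCommGroup E] [NormedSpace ℝ E]
  [NormedAddCommGroup F] [NormedSpace ℝ F]

/-- Iterated directional derivative along a list of directions. -/
noncomputable def pdVL (L : List E) (f : E → F) : E → F := L.foldr (fun v g => pd v g) f

@[simp] lemma pdVL_nil (f : E → F) : pdVL [] f = f := rfl
@[simp] lemma pdVL_cons (v : E) (L : List E) (f : E → F) :
    pdVL (v :: L) f = pd v (pdVL L f) := rfl

lemma pdVL_append (L₁ L₂ : List E) (f : E → F) :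
    pdVL (L₁ ++ L₂) f = pdVL L₁ (pdVL L₂ f) := by
  induction L₁ with
  | nil => rfl
  | cons v L ih => simp [ih]

lemma pdVL_replicate (m : ℕ) (v : E) (f : E → F) :
    pdVL (List.replicate m v) f = (pd v)^[m] f := by
  induction m with
  | zero => rfl
  | succ m ih => simp [List.replicate_succ, ih, Function.iterate_succ_apply']

lemma foldr_eq_pdVL {n : ℕ} (vs : Fin n → E) (a : Fin n → ℕ) (f : E → F) (L : List (Fin n)) :
    L.foldr (fun j g => (pd (vs j))^[a j] g) f
      = pdVL (L.flatMap fun j => List.replicate (a j) (vs j)) f := by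
  induction L with
  | nil => rfl
  | cons j L ih => simp [List.flatMap_cons, pdVL_append, ih, pdVL_replicate]

lemma mpd_eq_pdVL {n : ℕ} (vs : Fin n → E) (a : Fin n → ℕ) (f : E → F) :
    mpd vs a f = pdVL ((List.finRange n).flatMap fun j => List.replicate (a j) (vs j)) f :=
  foldr_eq_pdVL vs a f _

lemma contDiff_pdVL {f : E → F} (hf : ContDiff ℝ (⊤ : ℕ∞) f) (L : List E) :
    ContDiff ℝ (⊤ : ℕ∞) (pdVL L f) := by
  induction L with
  | nil => exact hf
  | cons v L ih => exact (contDiff_pd ih v).1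

lemma pdVL_perm {f : E → F} (hf : ContDiff ℝ (⊤ : ℕ∞) f) {L L' : List E} (h : L.Perm L') :
    pdVL L f = pdVL L' f := by
  induction h with
  | nil => rfl
  | cons v _ ih => simp [ih]
  | swap u v L => simp [pd_comm (contDiff_pdVL hf L) u v]
  | trans _ _ ih₁ ih₂ => rw [ih₁, ih₂]

lemma pdVL_ofReal (L : List E) (g : E → ℝ) :
    pdVL L (fun y => ((g y : ℝ) : ℂ)) = fun y => ((pdVL L g y : ℝ) : ℂ) := by
  induction L with
  | nil => rfl
  | cons v L ih => funext x; simp only [pdVL_cons, ih]; exact pd_ofReal _ v x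

end PdList

lemma count_flatMap_replicate {n : ℕ} (a : Fin n → ℕ) (x : Fin n) :
    ∀ L : List (Fin n), L.Nodup → x ∈ L →
      ((L.flatMap fun j => List.replicate (a j) j).count x) = a x := by
  intro L
  induction L with
  | nil => simp
  | cons j L ih =>
    intro hnd hmem
    rw [List.flatMap_cons, List.count_append]
    rcases List.mem_cons.1 hmem with h | h
    · subst h
      rw [List.count_replicate_self]
      have : x ∉ L := (List.nodup_cons.1 hnd).1
      have hz : ((L.flatMap fun j => List.replicate (a j) j).count x) = 0 := by
        rw [List.count_eq_zero]
        intro hc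
        rcases List.mem_flatMap.1 hc with ⟨k, hk, hxk⟩
        exact this ((List.eq_of_mem_replicate hxk) ▸ hk)
      omega
    · have hne : j ≠ x := by rintro rfl; exact (List.nodup_cons.1 hnd).1 h
      rw [List.count_replicate, if_neg (by simpa using hne), ih (List.nodup_cons.1 hnd).2 h]; omega

lemma perm_canon {n : ℕ} (L : List (Fin n)) :
    ((List.finRange n).flatMap fun j => List.replicate (L.count j) j).Perm L := by
  rw [List.perm_iff_count]
  intro x
  rw [count_flatMap_replicate (fun j => L.count j) x (List.finRange n)
    (List.nodup_finRange n) (List.mem_finRange x)]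

/-- The parameter measure on `(s,t) ∈ (0,2] × (0,1]`. -/
noncomputable def mu2 : Measure (ℝ × ℝ) :=
  (volume.restrict (Set.Ioc (0:ℝ) 2)).prod (volume.restrict (Set.Ioc (0:ℝ) 1))

instance : IsFiniteMeasure mu2 := by
  unfold mu2
  have h1 : IsFiniteMeasure (volume.restrict (Set.Ioc (0:ℝ) 2)) := by
    constructor; simp [Real.volume_Ioc]
  have h2 : IsFiniteMeasure (volume.restrict (Set.Ioc (0:ℝ) 1)) := by
    constructor; simp [Real.volume_Ioc]
  infer_instance

def alf (q : ℝ × ℝ) : ℝ := q.1 - q.1 * q.2 - 1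
def bef (q : ℝ × ℝ) : ℝ := q.1 * q.2 - 1
def wf (k l : ℕ) (q : ℝ × ℝ) : ℝ := q.1 * alf q ^ k * bef q ^ l

lemma continuous_alf : Continuous alf := by
  unfold alf; fun_prop
lemma continuous_bef : Continuous bef := by
  unfold bef; fun_prop
lemma continuous_wf (k l : ℕ) : Continuous (wf k l) := by
  unfold wf; exact (continuous_fst.mul (continuous_alf.pow k)).mul (continuous_bef.pow l)

lemma mu2_ae_mem : ∀ᵐ q ∂mu2, q ∈ Set.Ioc (0:ℝ) 2 ×ˢ Set.Ioc (0:ℝ) 1 := by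
  unfold mu2
  rw [Measure.prod_restrict]
  exact ae_restrict_mem ((measurableSet_Ioc).prod measurableSet_Ioc)

lemma alf_bound {q : ℝ × ℝ} (hq : q ∈ Set.Ioc (0:ℝ) 2 ×ˢ Set.Ioc (0:ℝ) 1) : |alf q| ≤ 5 := by
  obtain ⟨⟨h1, h2⟩, h3, h4⟩ := hq
  have : |q.1 * q.2| ≤ 2 := by
    rw [abs_mul]
    calc |q.1| * |q.2| ≤ 2 * 1 := by
          apply mul_le_mul <;> [skip; skip; positivity; norm_num]
          · rw [abs_le]; constructor <;> nlinarith
          · rw [abs_le]; constructor <;> nlinarith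
      _ = 2 := by norm_num
    
  unfold alf
  rw [abs_le] at *
  constructor <;> nlinarith [this.1, this.2]

lemma bef_bound {q : ℝ × ℝ} (hq : q ∈ Set.Ioc (0:ℝ) 2 ×ˢ Set.Ioc (0:ℝ) 1) : |bef q| ≤ 3 := by
  obtain ⟨⟨h1, h2⟩, h3, h4⟩ := hq
  unfold bef
  rw [abs_le]
  constructor <;> nlinarith

lemma wf_bound (k l : ℕ) {q : ℝ × ℝ} (hq : q ∈ Set.Ioc (0:ℝ) 2 ×ˢ Set.Ioc (0:ℝ) 1) :
    |wf k l q| ≤ 2 * 5 ^ k * 3 ^ l := by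
  have ha := alf_bound hq
  have hb := bef_bound hq
  obtain ⟨⟨h1, h2⟩, _, _⟩ := hq
  unfold wf
  rw [abs_mul, abs_mul, abs_pow, abs_pow]
  have h5 : |alf q| ^ k ≤ 5 ^ k := pow_le_pow_left₀ (abs_nonneg _) ha k
  have h3 : |bef q| ^ l ≤ 3 ^ l := pow_le_pow_left₀ (abs_nonneg _) hb l
  have h2' : |q.1| ≤ 2 := by rw [abs_le]; constructor <;> linarith
  calc |q.1| * |alf q| ^ k * |bef q| ^ l ≤ 2 * 5 ^ k * 3 ^ l := by
        apply mul_le_mul _ h3 (by positivity) (by positivity)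
        exact mul_le_mul h2' h5 (by positivity) (by norm_num)

/-- The linear map `p ↦ p.1 + α q • p.2.1 + β q • p.2.2`. -/
noncomputable def Lmap {n : ℕ} (q : ℝ × ℝ) : (Vec n × Vec n × Vec n) →L[ℝ] Vec n :=
  ContinuousLinearMap.fst ℝ (Vec n) (Vec n × Vec n)
  + alf q • ((ContinuousLinearMap.fst ℝ (Vec n) (Vec n)).comp
      (ContinuousLinearMap.snd ℝ (Vec n) (Vec n × Vec n)))
  + bef q • ((ContinuousLinearMap.snd ℝ (Vec n) (Vec n)).comp
      (ContinuousLinearMap.snd ℝ (Vec n) (Vec n × Vec n)))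

lemma Lmap_apply {n : ℕ} (q : ℝ × ℝ) (p : Vec n × Vec n × Vec n) :
    Lmap q p = p.1 + alf q • p.2.1 + bef q • p.2.2 := rfl

lemma Lmap_norm_le {n : ℕ} (q : ℝ × ℝ) : ‖(Lmap (n := n) q)‖ ≤ 1 + |alf q| + |bef q| := by
  apply ContinuousLinearMap.opNorm_le_bound _ (by positivity)
  intro p
  rw [Lmap_apply]
  have h1 : ‖p.1‖ ≤ ‖p‖ := norm_fst_le p
  have h2 : ‖p.2.1‖ ≤ ‖p‖ := le_trans (norm_fst_le p.2) (norm_snd_le p)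
  have h3 : ‖p.2.2‖ ≤ ‖p‖ := le_trans (norm_snd_le p.2) (norm_snd_le p)
  calc ‖p.1 + alf q • p.2.1 + bef q • p.2.2‖
      ≤ ‖p.1 + alf q • p.2.1‖ + ‖bef q • p.2.2‖ := norm_add_le _ _
    _ ≤ ‖p.1‖ + ‖alf q • p.2.1‖ + ‖bef q • p.2.2‖ := by
        have := norm_add_le p.1 (alf q • p.2.1); linarith
    _ ≤ ‖p‖ + |alf q| * ‖p‖ + |bef q| * ‖p‖ := by
        rw [norm_smul, norm_smul, Real.norm_eq_abs, Real.norm_eq_abs]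
        gcongr
    _ = (1 + |alf q| + |bef q|) * ‖p‖ := by ring

lemma continuous_Lmap_apply {n : ℕ} (p : Vec n × Vec n × Vec n) :
    Continuous fun q => Lmap q p := by
  simp only [Lmap_apply]
  exact (continuous_const.add ((continuous_alf).smul continuous_const)).add
    ((continuous_bef).smul continuous_const)

/-- Integrability of an a.e.-bounded strongly measurable function w.r.t. `mu2`. -/
lemma integrable_of_bound {E : Type*} [NormedAddCommGroup E] (h : ℝ × ℝ → E)
    (hm : AEStronglyMeasurable h mu2) (C : ℝ)
    (hb : ∀ q ∈ Set.Ioc (0:ℝ) 2 ×ˢ Set.Ioc (0:ℝ) 1, ‖h q‖ ≤ C) : Integrable h mu2 := by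
  refine Integrable.mono' (integrable_const C) hm ?_
  filter_upwards [mu2_ae_mem] with q hq using hb q hq
def ee {n : ℕ} (j : Fin n) : Vec n := EuclideanSpace.single j 1

section Good
variable {n : ℕ} {A : Set (Vec n → ℂ)}

/-- `φ` is smooth and all its iterated partial derivatives (complexified) belong to `A`. -/
def GoodFn (A : Set (Vec n → ℂ)) (φ : Vec n → ℝ) : Prop :=
  ContDiff ℝ (⊤ : ℕ∞) φ ∧ ∀ L : List (Fin n), (fun x => ((pdVL (L.map ee) φ x : ℝ) : ℂ)) ∈ A

lemma GoodFn.smooth {φ} (h : GoodFn A φ) : ContDiff ℝ (⊤ : ℕ∞) φ := h.1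

lemma GoodFn.memA {φ} (h : GoodFn A φ) : (fun x => ((φ x : ℝ) : ℂ)) ∈ A := h.2 []

lemma GoodFn.pdgood {φ} (h : GoodFn A φ) (j : Fin n) : GoodFn A (pd (ee j) φ) := by
  refine ⟨(contDiff_pd h.1 (ee j)).1, fun L => ?_⟩
  have he : pdVL (L.map ee) (pd (ee j) φ) = pdVL ((L ++ [j]).map ee) φ := by
    rw [List.map_append, pdVL_append]; rfl
  rw [he]; exact h.2 (L ++ [j])

lemma GoodFn.bounded (hA : IsAdmissible n A) {φ} (h : GoodFn A φ) :
    ∃ C, 0 ≤ C ∧ ∀ x, |φ x| ≤ C := by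
  obtain ⟨C, hC⟩ := (hA.1 _ h.memA).2
  refine ⟨max C 0, le_max_right _ _, fun x => ?_⟩
  have := hC x
  simp only [Complex.norm_real, Real.norm_eq_abs] at this
  exact this.trans (le_max_left _ _)

lemma coord_abs_le_norm {n : ℕ} (v : Vec n) (j : Fin n) : |v j| ≤ ‖v‖ := by
  have h1 : (inner ℝ (EuclideanSpace.single j (1:ℝ)) v : ℝ) = v j := by
    rw [EuclideanSpace.inner_single_left]; simp
  have h2 := abs_real_inner_le_norm (EuclideanSpace.single j (1:ℝ)) v
  rw [h1, EuclideanSpace.norm_single] at h2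
  simpa using h2

lemma GoodFn.fderiv_bound (hA : IsAdmissible n A) {φ} (h : GoodFn A φ) :
    ∃ C, 0 ≤ C ∧ ∀ x, ‖fderiv ℝ φ x‖ ≤ C := by
  choose C hC0 hC using fun j => (h.pdgood j).bounded hA
  refine ⟨∑ j, C j, Finset.sum_nonneg fun j _ => hC0 j, fun x => ?_⟩
  apply ContinuousLinearMap.opNorm_le_bound _ (Finset.sum_nonneg fun j _ => hC0 j)
  intro v
  have hv : ∑ j, v j • ee j = v := by
    have := (EuclideanSpace.basisFun (Fin n) ℝ).sum_repr v
    simpa [ee, EuclideanSpace.basisFun_apply, EuclideanSpace.basisFun_repr] using this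
  have hcoef : ∀ j, |fderiv ℝ φ x (ee j)| ≤ C j := by
    intro j
    have := hC j x
    rwa [pd_eq_fderiv (ee j) ((h.1.differentiable (by simp)) x)] at this
  have hsum : fderiv ℝ φ x v = ∑ j, v j • fderiv ℝ φ x (ee j) := by
    nth_rewrite 1 [← hv]
    rw [map_sum]
    simp
  rw [hsum]
  calc ‖∑ j, v j • fderiv ℝ φ x (ee j)‖
      ≤ ∑ j, ‖v j • fderiv ℝ φ x (ee j)‖ := norm_sum_le _ _
    _ ≤ ∑ j, C j * ‖v‖ := by
        apply Finset.sum_le_sum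
        intro j _
        rw [norm_smul, Real.norm_eq_abs, Real.norm_eq_abs]
        calc |v j| * |fderiv ℝ φ x (ee j)| ≤ ‖v‖ * C j :=
              mul_le_mul (coord_abs_le_norm v j) (hcoef j) (abs_nonneg _) (norm_nonneg _)
          _ = C j * ‖v‖ := mul_comm _ _
    _ = (∑ j, C j) * ‖v‖ := by rw [Finset.sum_mul]

end Good

section ElemSec
variable {n : ℕ} {A : Set (Vec n → ℂ)}

/-- The elementary building block. -/
noncomputable def Elem (k l : ℕ) (φ : Vec n → ℝ) : Vec n × Vec n × Vec n → ℝ :=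
  fun p => ∫ q, wf k l q * φ (Lmap q p) ∂mu2

noncomputable def ElemD (k l : ℕ) (φ : Vec n → ℝ) (q : ℝ × ℝ) (p : Vec n × Vec n × Vec n) :
    (Vec n × Vec n × Vec n) →L[ℝ] ℝ :=
  wf k l q • ((fderiv ℝ φ (Lmap q p)).comp (Lmap q))

lemma continuous_LmapCLM : Continuous fun q => (Lmap (n := n) q) := by
  unfold Lmap
  exact (continuous_const.add (continuous_alf.smul continuous_const)).add
    (continuous_bef.smul continuous_const)

lemma elemD_cont {φ : Vec n → ℝ} (hφ : ContDiff ℝ (⊤ : ℕ∞) φ) (k l : ℕ) (p : Vec n × Vec n × Vec n) :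
    Continuous fun q => ElemD k l φ q p := by
  have hD : Continuous fun q => fderiv ℝ φ (Lmap q p) :=
    (hφ.continuous_fderiv (by simp)).comp (continuous_Lmap_apply p)
  exact (continuous_wf k l).smul (hD.clm_comp continuous_LmapCLM)

lemma elemD_bound {φ : Vec n → ℝ} {CD : ℝ} (hCD : ∀ x, ‖fderiv ℝ φ x‖ ≤ CD)
    (k l : ℕ) (p : Vec n × Vec n × Vec n) {q : ℝ × ℝ}
    (hq : q ∈ Set.Ioc (0:ℝ) 2 ×ˢ Set.Ioc (0:ℝ) 1) :
    ‖ElemD k l φ q p‖ ≤ 2 * 5 ^ k * 3 ^ l * (CD * 9) := by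
  have h1 : ‖ElemD k l φ q p‖ ≤ |wf k l q| * (‖fderiv ℝ φ (Lmap q p)‖ * ‖Lmap (n := n) q‖) := by
    unfold ElemD
    have hns := norm_smul (wf k l q) ((fderiv ℝ φ (Lmap q p)).comp (Lmap (n := n) q))
    rw [hns, Real.norm_eq_abs]
    exact mul_le_mul_of_nonneg_left (ContinuousLinearMap.opNorm_comp_le _ _) (abs_nonneg _)
  have hCD0 : 0 ≤ CD := le_trans (norm_nonneg _) (hCD 0)
  have h2 : ‖Lmap (n := n) q‖ ≤ 9 := by
    refine (Lmap_norm_le q).trans ?_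
    have := alf_bound hq; have := bef_bound hq; linarith
  refine h1.trans ?_
  calc |wf k l q| * (‖fderiv ℝ φ (Lmap q p)‖ * ‖Lmap (n := n) q‖)
      ≤ (2 * 5 ^ k * 3 ^ l) * (CD * 9) := by
        apply mul_le_mul (wf_bound k l hq) _ (by positivity) (by positivity)
        exact mul_le_mul (hCD _) h2 (norm_nonneg _) hCD0

lemma elem_integrand_hasFDerivAt {φ : Vec n → ℝ} (hφ : ContDiff ℝ (⊤ : ℕ∞) φ) (k l : ℕ)
    (q : ℝ × ℝ) (p : Vec n × Vec n × Vec n) :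
    HasFDerivAt (fun p' => wf k l q * φ (Lmap q p')) (ElemD k l φ q p) p := by
  have h1 : HasFDerivAt φ (fderiv ℝ φ (Lmap q p)) (Lmap q p) :=
    ((hφ.differentiable (by simp)) _).hasFDerivAt
  have h2 : HasFDerivAt (fun p' => φ (Lmap q p')) ((fderiv ℝ φ (Lmap q p)).comp (Lmap q)) p :=
    h1.comp p (Lmap q).hasFDerivAt
  exact h2.const_mul _

lemma elem_hasFDerivAt (hA : IsAdmissible n A) {φ} (hφ : GoodFn A φ) (k l : ℕ)
    (p : Vec n × Vec n × Vec n) :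
    HasFDerivAt (Elem k l φ) (∫ q, ElemD k l φ q p ∂mu2) p := by
  obtain ⟨Cφ, hCφ0, hCφ⟩ := hφ.bounded hA
  obtain ⟨CD, hCD0, hCD⟩ := hφ.fderiv_bound hA
  have hmeas : ∀ p' : Vec n × Vec n × Vec n,
      AEStronglyMeasurable (fun q => wf k l q * φ (Lmap q p')) mu2 := fun p' =>
    ((continuous_wf k l).mul (hφ.1.continuous.comp (continuous_Lmap_apply p'))).aestronglyMeasurable
  apply hasFDerivAt_integral_of_dominated_of_fderiv_le (𝕜 := ℝ)
    (F' := fun p' q => ElemD k l φ q p') (bound := fun _ => 2 * 5 ^ k * 3 ^ l * (CD * 9))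
    (s := Metric.ball p 1) (Metric.ball_mem_nhds p one_pos)
  · exact Filter.Eventually.of_forall hmeas
  · apply integrable_of_bound _ (hmeas p) (2 * 5 ^ k * 3 ^ l * Cφ)
    intro q hq
    rw [Real.norm_eq_abs, abs_mul]
    exact mul_le_mul (wf_bound k l hq) (hCφ _) (abs_nonneg _) (by positivity)
  · exact (elemD_cont hφ.1 k l p).aestronglyMeasurable
  · filter_upwards [mu2_ae_mem] with q hq
    intro p' _
    exact elemD_bound hCD k l p' hq
  · exact integrable_const _
  · filter_upwards with q
    intro p' _
    exact elem_integrand_hasFDerivAt hφ.1 k l q p'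

lemma elem_differentiable (hA : IsAdmissible n A) {φ} (hφ : GoodFn A φ) (k l : ℕ) :
    Differentiable ℝ (Elem k l φ) := fun p =>
  (elem_hasFDerivAt hA hφ k l p).differentiableAt

lemma elemD_integrable (hA : IsAdmissible n A) {φ} (hφ : GoodFn A φ) (k l : ℕ)
    (p : Vec n × Vec n × Vec n) : Integrable (fun q => ElemD k l φ q p) mu2 := by
  obtain ⟨CD, hCD0, hCD⟩ := hφ.fderiv_bound hA
  exact integrable_of_bound _ (elemD_cont hφ.1 k l p).aestronglyMeasurable _
    (fun q hq => elemD_bound hCD k l p hq)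

lemma pd_elem (hA : IsAdmissible n A) {φ} (hφ : GoodFn A φ) (k l : ℕ)
    (v : Vec n × Vec n × Vec n) (p : Vec n × Vec n × Vec n) :
    pd v (Elem k l φ) p = ∫ q, wf k l q * fderiv ℝ φ (Lmap q p) (Lmap q v) ∂mu2 := by
  rw [pd_eq_fderiv v (elem_differentiable hA hφ k l p),
    (elem_hasFDerivAt hA hφ k l p).fderiv]
  rw [ContinuousLinearMap.integral_apply (elemD_integrable hA hφ k l p) v]
  simp [ElemD, smul_eq_mul]

lemma pd_elem_e1 (hA : IsAdmissible n A) {φ} (hφ : GoodFn A φ) (k l : ℕ) (j : Fin n) :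
    pd (e1v n j) (Elem k l φ) = Elem k l (pd (ee j) φ) := by
  funext p
  rw [pd_elem hA hφ k l _ p]
  apply MeasureTheory.integral_congr_ae
  filter_upwards with q
  have h1 : Lmap (n := n) q (e1v n j) = ee j := by
    rw [Lmap_apply]; simp [e1v, ee]
  rw [h1, ← pd_eq_fderiv (ee j) ((hφ.1.differentiable (by simp)) _)]

lemma pd_elem_e2 (hA : IsAdmissible n A) {φ} (hφ : GoodFn A φ) (k l : ℕ) (j : Fin n) :
    pd (e2v n j) (Elem k l φ) = Elem (k + 1) l (pd (ee j) φ) := by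
  funext p
  rw [pd_elem hA hφ k l _ p]
  apply MeasureTheory.integral_congr_ae
  filter_upwards with q
  have h1 : Lmap (n := n) q (e2v n j) = alf q • ee j := by
    rw [Lmap_apply]; simp [e2v, ee]
  rw [h1, ContinuousLinearMap.map_smul, ← pd_eq_fderiv (ee j) ((hφ.1.differentiable (by simp)) _),
    smul_eq_mul]
  unfold wf
  ring

lemma pd_elem_e3 (hA : IsAdmissible n A) {φ} (hφ : GoodFn A φ) (k l : ℕ) (j : Fin n) :
    pd (e3v n j) (Elem k l φ) = Elem k (l + 1) (pd (ee j) φ) := by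
  funext p
  rw [pd_elem hA hφ k l _ p]
  apply MeasureTheory.integral_congr_ae
  filter_upwards with q
  have h1 : Lmap (n := n) q (e3v n j) = bef q • ee j := by
    rw [Lmap_apply]; simp [e3v, ee]
  rw [h1, ContinuousLinearMap.map_smul, ← pd_eq_fderiv (ee j) ((hφ.1.differentiable (by simp)) _),
    smul_eq_mul]
  unfold wf
  ring

end ElemSec
set_option maxHeartbeats 1000000
set_option synthInstance.maxHeartbeats 400000
open BoundedContinuousFunction
section MemA
variable {n : ℕ} {A : Set (Vec n → ℂ)}

lemma mu2_univ : mu2 (Set.univ) = 2 := by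
  unfold mu2
  rw [← Set.univ_prod_univ, MeasureTheory.Measure.prod_prod,
    MeasureTheory.Measure.restrict_apply_univ, MeasureTheory.Measure.restrict_apply_univ,
    Real.volume_Ioc, Real.volume_Ioc]
  rw [show (2:ℝ) - 0 = 2 by norm_num, show (1:ℝ) - 0 = 1 by norm_num, ENNReal.ofReal_one, mul_one]
  norm_num

instance : NeZero (mu2) := by
  refine ⟨fun h => ?_⟩
  have h2 := mu2_univ
  rw [h] at h2
  simp at h2

/-- The set of bounded continuous functions whose underlying function lies in `A`. -/
def Abcf (A : Set (Vec n → ℂ)) : Set (Vec n →ᵇ ℂ) := {f | ⇑f ∈ A}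

lemma Abcf_smul_mem (hA : IsAdmissible n A) {f : Vec n →ᵇ ℂ} (hf : f ∈ Abcf A) (c : ℝ) :
    c • f ∈ Abcf A := by
  have : ⇑(c • f) = (c : ℂ) • ⇑f := by
    funext x
    simp [Complex.real_smul]
  show ⇑(c • f) ∈ A
  rw [this]
  exact hA.2.2.2.1 _ hf _

lemma Abcf_convex (hA : IsAdmissible n A) : Convex ℝ (Abcf A) := by
  intro f hf g hg a b ha hb hab
  have h1 : a • f + b • g ∈ Abcf A := by
    show ⇑(a • f + b • g) ∈ A
    have : ⇑(a • f + b • g) = ((a : ℂ) • ⇑f) + ((b : ℂ) • ⇑g) := by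
      funext x
      simp [Complex.real_smul]
    rw [this]
    exact hA.2.1 _ (hA.2.2.2.1 _ hf _) _ (hA.2.2.2.1 _ hg _)
  exact h1

lemma Abcf_closed (hA : IsAdmissible n A) : IsClosed (Abcf A) := by
  apply IsSeqClosed.isClosed
  intro f g hf hfg
  exact hA.2.2.2.2.2.2.1 (fun m => ⇑(f m)) ⇑g (fun m => hf m)
    (BoundedContinuousFunction.tendsto_iff_tendstoUniformly.1 hfg)

lemma elem_memA (hA : IsAdmissible n A) {φ} (hφ : GoodFn A φ) (k l : ℕ) (y z : Vec n) :
    (fun x => ((Elem k l φ (x, y, z) : ℝ) : ℂ)) ∈ A := by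
  classical
  set ψ : Vec n → ℂ := fun x => ((φ x : ℝ) : ℂ) with hψ
  have hψA : ψ ∈ A := hφ.memA
  obtain ⟨hψu, Cψ, hCψ⟩ := hA.1 ψ hψA
  set C' : ℝ := max Cψ 0 with hC'
  have hC'0 : 0 ≤ C' := le_max_right _ _
  have hCb : ∀ x, ‖ψ x‖ ≤ C' := fun x => (hCψ x).trans (le_max_left _ _)
  -- the translation map into bounded continuous functions
  set T : Vec n → (Vec n →ᵇ ℂ) := fun u =>
    BoundedContinuousFunction.ofNormedAddCommGroup (fun x => ψ (x + u))
      (hψu.continuous.comp (continuous_id.add continuous_const)) C' (fun x => hCb _) with hT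
  have hTapp : ∀ u x, T u x = ψ (x + u) := fun u x => rfl
  have hTnorm : ∀ u, ‖T u‖ ≤ C' := fun u =>
    BoundedContinuousFunction.norm_ofNormedAddCommGroup_le _ hC'0 _
  have hTcont : Continuous T := by
    rw [Metric.continuous_iff]
    intro u ε hε
    obtain ⟨δ, hδ, hδε⟩ := Metric.uniformContinuous_iff.1 hψu (ε / 2) (by linarith)
    refine ⟨δ, hδ, fun u' hu' => ?_⟩
    have hle : dist (T u') (T u) ≤ ε / 2 := by
      rw [BoundedContinuousFunction.dist_le (by linarith)]
      intro x
      have : dist (x + u') (x + u) < δ := by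
        simpa [dist_eq_norm, add_sub_add_left_eq_sub] using hu'
      exact le_of_lt (hδε this)
    linarith
  set v : ℝ × ℝ → Vec n := fun q => alf q • y + bef q • z with hv
  have hvcont : Continuous v := (continuous_alf.smul continuous_const).add
    (continuous_bef.smul continuous_const)
  set Ψ : ℝ × ℝ → (Vec n →ᵇ ℂ) := fun q => wf k l q • T (v q) with hΨ
  have hΨcont : Continuous Ψ := (continuous_wf k l).smul (hTcont.comp hvcont)
  have hΨint : MeasureTheory.Integrable Ψ mu2 := by
    apply integrable_of_bound _ hΨcont.aestronglyMeasurable (2 * 5 ^ k * 3 ^ l * C')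
    intro q hq
    rw [norm_smul, Real.norm_eq_abs]
    exact mul_le_mul (wf_bound k l hq) (hTnorm _) (norm_nonneg _) (by positivity)
  have hΨmem : ∀ q, Ψ q ∈ Abcf A := by
    intro q
    have hTA : T (v q) ∈ Abcf A := by
      show ⇑(T (v q)) ∈ A
      have : ⇑(T (v q)) = fun x => ψ (x + v q) := rfl
      rw [this]
      exact hA.2.2.2.2.2.2.2 ψ hψA (v q)
    exact Abcf_smul_mem hA hTA _
  have havg : ⨍ q, Ψ q ∂mu2 ∈ Abcf A :=
    (Abcf_convex hA).average_mem (Abcf_closed hA) (Filter.Eventually.of_forall hΨmem) hΨint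
  have hJ : (∫ q, Ψ q ∂mu2) ∈ Abcf A := by
    rw [← MeasureTheory.measure_smul_average]
    exact Abcf_smul_mem hA havg _
  -- identify the target function with the coercion of the integral
  have hkey : (fun x => ((Elem k l φ (x, y, z) : ℝ) : ℂ)) = ⇑(∫ q, Ψ q ∂mu2) := by
    funext x
    have heval := (BoundedContinuousFunction.evalCLM ℂ x).integral_comp_comm hΨint
    have heval' : (∫ q, Ψ q ∂mu2) x = ∫ q, (Ψ q) x ∂mu2 := heval.symm
    rw [heval']
    have h1 : ∀ q, (Ψ q) x = ((wf k l q * φ (Lmap q (x, y, z)) : ℝ) : ℂ) := by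
      intro q
      show (wf k l q • T (v q)) x = _
      rw [BoundedContinuousFunction.coe_smul]
      simp only [Pi.smul_apply, hTapp]
      rw [Complex.ofReal_mul, Complex.real_smul]
      congr 2
      rw [Lmap_apply]
      simp [hψ, v, add_assoc]
    rw [show (fun q => (Ψ q) x) = fun q => ((wf k l q * φ (Lmap q (x, y, z)) : ℝ) : ℂ) from
      funext h1]
    have hg : MeasureTheory.Integrable (fun q => wf k l q * φ (Lmap q (x, y, z))) mu2 := by
      apply integrable_of_bound _ ((continuous_wf k l).mul
        (hφ.1.continuous.comp (continuous_Lmap_apply _))).aestronglyMeasurable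
        (2 * 5 ^ k * 3 ^ l * C')
      intro q hq
      show ‖wf k l q * φ (Lmap q (x, y, z))‖ ≤ _
      rw [Real.norm_eq_abs, abs_mul]
      refine mul_le_mul (wf_bound k l hq) ?_ (abs_nonneg _) (by positivity)
      have h2 := hCb (Lmap q (x, y, z))
      rw [hψ] at h2
      simpa using h2
    show ((∫ q, wf k l q * φ (Lmap q (x, y, z)) ∂mu2 : ℝ) : ℂ)
      = ∫ q, ((wf k l q * φ (Lmap q (x, y, z)) : ℝ) : ℂ) ∂mu2
    rw [← Complex.ofRealCLM_apply, ← ContinuousLinearMap.integral_comp_comm Complex.ofRealCLM hg]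
    rfl
  rw [hkey]
  exact hJ

end MemA
section PdAlg
variable {E : Type*} [NormedAddCommGroup E] [NormedSpace ℝ E]

lemma pd_const (v : E) (c : ℝ) : pd v (fun _ : E => c) = fun _ => 0 := by
  funext x
  unfold pd lineDeriv
  simp

lemma pd_add (v : E) {f g : E → ℝ} (hf : Differentiable ℝ f) (hg : Differentiable ℝ g) :
    pd v (fun p => f p + g p) = fun p => pd v f p + pd v g p := by
  funext x
  rw [pd_eq_fderiv v ((hf x).fun_add (hg x)), pd_eq_fderiv v (hf x), pd_eq_fderiv v (hg x),
    fderiv_fun_add (hf x) (hg x)]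
  rfl

lemma pd_const_mul (v : E) (c : ℝ) {f : E → ℝ} (hf : Differentiable ℝ f) :
    pd v (fun p => c * f p) = fun p => c * pd v f p := by
  funext x
  rw [pd_eq_fderiv v ((hf x).const_mul c), pd_eq_fderiv v (hf x), fderiv_const_mul (hf x)]
  rfl

lemma pd_mul (v : E) {f g : E → ℝ} (hf : Differentiable ℝ f) (hg : Differentiable ℝ g) :
    pd v (fun p => f p * g p) = fun p => pd v f p * g p + f p * pd v g p := by
  funext x
  rw [pd_eq_fderiv v ((hf x).fun_mul (hg x)), pd_eq_fderiv v (hf x), pd_eq_fderiv v (hg x),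
    fderiv_fun_mul (hf x) (hg x)]
  simp only [ContinuousLinearMap.add_apply, ContinuousLinearMap.smul_apply, smul_eq_mul]
  ring

end PdAlg

section MonSec
variable {n : ℕ}

/-- Monomial in the coordinates. -/
def Mon (m : Fin n → ℕ) (y : Vec n) : ℝ := ∏ i, y i ^ m i

lemma contDiff_Mon (m : Fin n → ℕ) : ContDiff ℝ (⊤ : ℕ∞) (Mon m) := by
  apply contDiff_prod
  intro i _
  exact ((PiLp.proj (𝕜 := ℝ) (p := 2) (β := fun _ : Fin n => ℝ) i).contDiff).pow (m i)

lemma Mon_update (m : Fin n → ℕ) (j : Fin n) (v : ℕ) (y : Vec n) :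
    Mon (Function.update m j v) y = y j ^ v * ∏ i ∈ Finset.univ.erase j, y i ^ m i := by
  unfold Mon
  rw [← Finset.mul_prod_erase Finset.univ _ (Finset.mem_univ j)]
  congr 1
  · rw [Function.update_self]
  · apply Finset.prod_congr rfl
    intro i hi
    rw [Function.update_of_ne (Finset.ne_of_mem_erase hi)]

lemma pd_Mon (m : Fin n → ℕ) (j : Fin n) (y : Vec n) :
    pd (ee j) (Mon m) y = (m j : ℝ) * Mon (Function.update m j (m j - 1)) y := by
  classical
  have hfun : (fun τ : ℝ => Mon m (y + τ • ee j))
      = fun τ => ∏ i, (y i + τ * (if i = j then 1 else 0)) ^ m i := by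
    funext τ
    unfold Mon
    apply Finset.prod_congr rfl
    intro i _
    congr 1
    simp [ee, EuclideanSpace.single_apply, PiLp.add_apply, PiLp.smul_apply, smul_eq_mul]
  have hd : ∀ i ∈ (Finset.univ : Finset (Fin n)), HasDerivAt
      (fun τ : ℝ => (y i + τ * (if i = j then 1 else 0)) ^ m i)
      ((m i : ℝ) * (y i + 0 * (if i = j then 1 else 0)) ^ (m i - 1)
        * (if i = j then 1 else 0)) 0 := by
    intro i _
    have hb : HasDerivAt (fun τ : ℝ => y i + τ * (if i = j then 1 else 0))
        (if i = j then 1 else 0) 0 := by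
      simpa using ((hasDerivAt_id (0:ℝ)).mul_const (if i = j then (1:ℝ) else 0)).const_add (y i)
    exact hb.pow (m i)
  have hder := HasDerivAt.fun_finset_prod hd
  have hpd : pd (ee j) (Mon m) y = deriv (fun τ : ℝ => Mon m (y + τ • ee j)) 0 := rfl
  rw [hpd, hfun, hder.deriv]
  rw [Finset.sum_eq_single j]
  · rw [if_pos rfl]
    rw [Mon_update]
    have : ∀ k ∈ Finset.univ.erase j,
        (y k + 0 * (if k = j then 1 else 0)) ^ m k = y k ^ m k := by
      intro k _; norm_num
    rw [Finset.prod_congr rfl this]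
    simp [smul_eq_mul]
    ring
  · intro i _ hij
    rw [if_neg hij]
    simp
  · intro h
    exact absurd (Finset.mem_univ j) h

lemma contDiff_M1 (m : Fin n → ℕ) :
    ContDiff ℝ (⊤ : ℕ∞) (fun p : Vec n × Vec n × Vec n => Mon m p.2.1) :=
  (contDiff_Mon m).comp (contDiff_fst.comp contDiff_snd)

lemma contDiff_M2 (m : Fin n → ℕ) :
    ContDiff ℝ (⊤ : ℕ∞) (fun p : Vec n × Vec n × Vec n => Mon m p.2.2) :=
  (contDiff_Mon m).comp (contDiff_snd.comp contDiff_snd)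

lemma pd_M1_e1 (m : Fin n → ℕ) (j : Fin n) :
    pd (e1v n j) (fun p : Vec n × Vec n × Vec n => Mon m p.2.1) = fun _ => 0 := by
  funext p
  show deriv (fun τ : ℝ => Mon m ((p + τ • e1v n j).2.1)) 0 = 0
  have : (fun τ : ℝ => Mon m ((p + τ • e1v n j).2.1)) = fun _ => Mon m p.2.1 := by
    funext τ
    congr 1
    show p.2.1 + τ • (0 : Vec n) = p.2.1
    simp
  rw [this, deriv_const]

lemma pd_M1_e3 (m : Fin n → ℕ) (j : Fin n) :
    pd (e3v n j) (fun p : Vec n × Vec n × Vec n => Mon m p.2.1) = fun _ => 0 := by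
  funext p
  show deriv (fun τ : ℝ => Mon m ((p + τ • e3v n j).2.1)) 0 = 0
  have : (fun τ : ℝ => Mon m ((p + τ • e3v n j).2.1)) = fun _ => Mon m p.2.1 := by
    funext τ
    congr 1
    show p.2.1 + τ • (0 : Vec n) = p.2.1
    simp
  rw [this, deriv_const]

lemma pd_M2_e1 (m : Fin n → ℕ) (j : Fin n) :
    pd (e1v n j) (fun p : Vec n × Vec n × Vec n => Mon m p.2.2) = fun _ => 0 := by
  funext p
  show deriv (fun τ : ℝ => Mon m ((p + τ • e1v n j).2.2)) 0 = 0
  have : (fun τ : ℝ => Mon m ((p + τ • e1v n j).2.2)) = fun _ => Mon m p.2.2 := by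
    funext τ
    congr 1
    show p.2.2 + τ • (0 : Vec n) = p.2.2
    simp
  rw [this, deriv_const]

lemma pd_M2_e2 (m : Fin n → ℕ) (j : Fin n) :
    pd (e2v n j) (fun p : Vec n × Vec n × Vec n => Mon m p.2.2) = fun _ => 0 := by
  funext p
  show deriv (fun τ : ℝ => Mon m ((p + τ • e2v n j).2.2)) 0 = 0
  have : (fun τ : ℝ => Mon m ((p + τ • e2v n j).2.2)) = fun _ => Mon m p.2.2 := by
    funext τ
    congr 1
    show p.2.2 + τ • (0 : Vec n) = p.2.2
    simp
  rw [this, deriv_const]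

lemma pd_M1_e2 (m : Fin n → ℕ) (j : Fin n) (p : Vec n × Vec n × Vec n) :
    pd (e2v n j) (fun p : Vec n × Vec n × Vec n => Mon m p.2.1) p
      = (m j : ℝ) * Mon (Function.update m j (m j - 1)) p.2.1 := by
  have h : (fun τ : ℝ => Mon m ((p + τ • e2v n j).2.1))
      = fun τ => Mon m (p.2.1 + τ • ee j) := by
    funext τ
    rfl
  show deriv (fun τ : ℝ => Mon m ((p + τ • e2v n j).2.1)) 0 = _
  rw [h]
  exact pd_Mon m j p.2.1

lemma pd_M2_e3 (m : Fin n → ℕ) (j : Fin n) (p : Vec n × Vec n × Vec n) :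
    pd (e3v n j) (fun p : Vec n × Vec n × Vec n => Mon m p.2.2) p
      = (m j : ℝ) * Mon (Function.update m j (m j - 1)) p.2.2 := by
  have h : (fun τ : ℝ => Mon m ((p + τ • e3v n j).2.2))
      = fun τ => Mon m (p.2.2 + τ • ee j) := by
    funext τ
    rfl
  show deriv (fun τ : ℝ => Mon m ((p + τ • e3v n j).2.2)) 0 = _
  rw [h]
  exact pd_Mon m j p.2.2

end MonSec
section InCSec
variable {n : ℕ}

/-- The class of finite combinations of monomial-weighted elementary integrals. -/
inductive InC (A : Set (Vec n → ℂ)) : ((Vec n × Vec n × Vec n) → ℝ) → Prop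
  | elem (m l : Fin n → ℕ) (k k' : ℕ) (φ : Vec n → ℝ) (hφ : GoodFn A φ) :
      InC A (fun p => Mon m p.2.1 * Mon l p.2.2 * Elem k k' φ p)
  | add {f g} : InC A f → InC A g → InC A (fun p => f p + g p)
  | smul (c : ℝ) {f} : InC A f → InC A (fun p => c * f p)

variable {A : Set (Vec n → ℂ)}

lemma InC.congr {f g} (hf : InC A f) (h : f = g) : InC A g := h ▸ hf

lemma InC.diff (hA : IsAdmissible n A) {f} (hf : InC A f) : Differentiable ℝ f := by
  induction hf with
  | elem m l k k' φ hφ =>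
    exact (((contDiff_M1 m).differentiable (by simp)).mul
      ((contDiff_M2 l).differentiable (by simp))).mul (elem_differentiable hA hφ k k')
  | add hf hg ihf ihg => exact ihf.add ihg
  | smul c hf ih => exact ih.const_mul _

lemma pdVL_goodzero (L : List (Vec n)) :
    pdVL L (fun _ : Vec n => (0:ℝ)) = fun _ => 0 := by
  induction L with
  | nil => rfl
  | cons v L ih => rw [pdVL_cons, ih, pd_const]

lemma goodFn_zero (hA : IsAdmissible n A) : GoodFn A (fun _ => 0) := by
  refine ⟨contDiff_const, fun L => ?_⟩
  rw [pdVL_goodzero]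
  have h : (fun _ : Vec n => ((0:ℝ):ℂ)) = (0:ℂ) • (fun _ : Vec n => (1:ℂ)) := by
    funext x; simp
  rw [h]
  exact hA.2.2.2.1 _ hA.2.2.2.2.2.1 0

lemma InC.zero (hA : IsAdmissible n A) : InC A (fun _ => 0) := by
  have h := InC.smul (A := A) 0
    (InC.elem 0 0 0 0 (fun _ => 0) (goodFn_zero hA))
  exact h.congr (by funext p; ring)

lemma InC.finsetSum (hA : IsAdmissible n A) {ι : Type*} (s : Finset ι)
    (g : ι → (Vec n × Vec n × Vec n) → ℝ) (h : ∀ i ∈ s, InC A (g i)) :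
    InC A (fun p => ∑ i ∈ s, g i p) := by
  classical
  induction s using Finset.induction with
  | empty => simpa using InC.zero hA
  | insert a s hnot ih =>
    have h1 := (h a (Finset.mem_insert_self a s)).add
      (ih fun i hi => h i (Finset.mem_insert_of_mem hi))
    exact h1.congr (by funext p; rw [Finset.sum_insert hnot])

/-- Closure of `InC` under the admissible directional derivatives. -/
lemma InC.pdc (hA : IsAdmissible n A) {f} (hf : InC A f) (v : Vec n × Vec n × Vec n)
    (hv : (∃ j, v = e1v n j) ∨ (∃ j, v = e2v n j) ∨ (∃ j, v = e3v n j)) :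
    InC A (pd v f) := by
  induction hf with
  | add hf hg ihf ihg =>
    rename_i f g
    exact (ihf.add ihg).congr (pd_add v (hf.diff hA) (hg.diff hA)).symm
  | smul c hf ih =>
    rename_i f
    exact (ih.smul c |>.congr rfl).congr (pd_const_mul v c (hf.diff hA)).symm
  | elem m l k k' φ hφ =>
    have hM1 : Differentiable ℝ (fun p : Vec n × Vec n × Vec n => Mon m p.2.1) :=
      (contDiff_M1 m).differentiable (by simp)
    have hM2 : Differentiable ℝ (fun p : Vec n × Vec n × Vec n => Mon l p.2.2) :=
      (contDiff_M2 l).differentiable (by simp)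
    have hE : Differentiable ℝ (Elem k k' φ) := elem_differentiable hA hφ k k'
    have hsplit : pd v (fun p => Mon m p.2.1 * Mon l p.2.2 * Elem k k' φ p)
        = fun p => (pd v (fun p : Vec n × Vec n × Vec n => Mon m p.2.1) p * Mon l p.2.2
            + Mon m p.2.1 * pd v (fun p : Vec n × Vec n × Vec n => Mon l p.2.2) p)
              * Elem k k' φ p
          + Mon m p.2.1 * Mon l p.2.2 * pd v (Elem k k' φ) p := by
      rw [pd_mul v (hM1.fun_mul hM2) hE, pd_mul v hM1 hM2]
    rcases hv with ⟨j, rfl⟩ | ⟨j, rfl⟩ | ⟨j, rfl⟩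
    · have h1 := InC.elem (A := A) m l k k' (pd (ee j) φ) (hφ.pdgood j)
      apply h1.congr
      rw [hsplit, pd_M1_e1, pd_M2_e1, pd_elem_e1 hA hφ]
      funext p
      simp
    · have h1 := (InC.elem (A := A) (Function.update m j (m j - 1)) l k k' φ hφ).smul (m j : ℝ)
      have h2 := InC.elem (A := A) m l (k + 1) k' (pd (ee j) φ) (hφ.pdgood j)
      apply (h1.add h2).congr
      rw [hsplit, pd_M2_e2, pd_elem_e2 hA hφ]
      funext p
      rw [pd_M1_e2 m j p]
      simp
      ring
    · have h1 := (InC.elem (A := A) m (Function.update l j (l j - 1)) k k' φ hφ).smul (l j : ℝ)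
      have h2 := InC.elem (A := A) m l k (k' + 1) (pd (ee j) φ) (hφ.pdgood j)
      apply (h1.add h2).congr
      rw [hsplit, pd_M1_e3, pd_elem_e3 hA hφ]
      funext p
      rw [pd_M2_e3 l j p]
      simp
      ring

lemma InC.memA (hA : IsAdmissible n A) {f} (hf : InC A f) (y z : Vec n) :
    (fun x => ((f (x, y, z) : ℝ) : ℂ)) ∈ A := by
  induction hf with
  | elem m l k k' φ hφ =>
    have h1 := elem_memA hA hφ k k' y z
    have h2 := hA.2.2.2.1 _ h1 ((Mon m y * Mon l z : ℝ) : ℂ)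
    have h3 : ((Mon m y * Mon l z : ℝ) : ℂ) • (fun x => ((Elem k k' φ (x, y, z) : ℝ) : ℂ))
        = fun x => ((Mon m y * Mon l z * Elem k k' φ (x, y, z) : ℝ) : ℂ) := by
      funext x
      push_cast
      try simp only [Pi.smul_apply, smul_eq_mul]
      try ring
    rw [h3] at h2
    exact h2
  | add hf hg ihf ihg =>
    rename_i f g
    have h1 := hA.2.1 _ ihf _ ihg
    have h3 : (fun x => ((f (x, y, z) : ℝ) : ℂ)) + (fun x => ((g (x, y, z) : ℝ) : ℂ))
        = fun x => ((f (x, y, z) + g (x, y, z) : ℝ) : ℂ) := by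
      funext x
      push_cast
      simp
    rw [h3] at h1
    exact h1
  | smul c hf ih =>
    rename_i f
    have h1 := hA.2.2.2.1 _ ih ((c : ℝ) : ℂ)
    have h3 : ((c : ℝ) : ℂ) • (fun x => ((f (x, y, z) : ℝ) : ℂ))
        = fun x => ((c * f (x, y, z) : ℝ) : ℂ) := by
      funext x
      push_cast
      simp [smul_eq_mul]
    rw [h3] at h1
    exact h1

end InCSec
section Final
variable {n : ℕ} {A : Set (Vec n → ℂ)}

lemma goodFn_of_hyp (hA : IsAdmissible n A) {φ : Vec n → ℝ} (hs : ContDiff ℝ (⊤ : ℕ∞) φ)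
    (h : ∀ a : Fin n → ℕ,
      (fun x => mpd (fun i => EuclideanSpace.single i (1 : ℝ)) a
        (fun y => ((φ y : ℝ) : ℂ)) x) ∈ A) : GoodFn A φ := by
  refine ⟨hs, fun L => ?_⟩
  set a : Fin n → ℕ := fun j => L.count j with ha
  set C : List (Fin n) := (List.finRange n).flatMap fun j => List.replicate (a j) j with hC
  have hperm : (C.map ee).Perm (L.map ee) := (perm_canon L).map ee
  have h1 : pdVL (L.map ee) φ = pdVL (C.map ee) φ := (pdVL_perm hs hperm).symm
  have h2 : C.map ee = (List.finRange n).flatMap fun j => List.replicate (a j) (ee j) := by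
    rw [hC, List.map_flatMap]
    refine congrArg (fun g => List.flatMap g _) ?_
    funext j
    rw [List.map_replicate]
  have h3 : (fun x => ((pdVL (L.map ee) φ x : ℝ) : ℂ))
      = pdVL (C.map ee) (fun y => ((φ y : ℝ) : ℂ)) := by
    rw [pdVL_ofReal, h1]
  rw [h3, h2, ← mpd_eq_pdVL]
  have hee : (fun i : Fin n => EuclideanSpace.single i (1:ℝ)) = ee := rfl
  rw [← hee]
  exact h a

lemma Mon_delta (j : Fin n) (y : Vec n) :
    Mon (fun i => if i = j then 1 else 0) y = y j := by
  unfold Mon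
  rw [show (fun i => y i ^ (if i = j then 1 else 0)) = fun i => if i = j then y i else 1 by
    funext i; by_cases h : i = j <;> simp [h]]
  simp

lemma elem_eq_iint (hA : IsAdmissible n A) {φ} (hφ : GoodFn A φ) (x y z : Vec n) :
    Elem 0 0 φ (x, y, z) = ∫ s in (0:ℝ)..2, ∫ t in (0:ℝ)..1,
      s * φ (x + (s - s * t - 1) • y + (s * t - 1) • z) := by
  obtain ⟨C, hC0, hC⟩ := hφ.bounded hA
  have hcont : Continuous fun q : ℝ × ℝ => wf 0 0 q * φ (Lmap q (x, y, z)) :=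
    (continuous_wf 0 0).mul (hφ.1.continuous.comp (continuous_Lmap_apply _))
  have hint : MeasureTheory.Integrable (fun q : ℝ × ℝ => wf 0 0 q * φ (Lmap q (x, y, z)))
      mu2 := by
    apply integrable_of_bound _ hcont.aestronglyMeasurable (2 * 5 ^ 0 * 3 ^ 0 * C)
    intro q hq
    rw [Real.norm_eq_abs, abs_mul]
    exact mul_le_mul (wf_bound 0 0 hq) (hC _) (abs_nonneg _) (by positivity)
  have hwf : ∀ s t : ℝ, wf 0 0 (s, t) = s := by
    intro s t; unfold wf; norm_num
  have hpt : ∀ s t : ℝ, Lmap (s, t) (x, y, z)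
      = x + (s - s * t - 1) • y + (s * t - 1) • z := by
    intro s t
    rw [Lmap_apply]
    rfl
  show (∫ q, wf 0 0 q * φ (Lmap q (x, y, z)) ∂mu2) = _
  rw [show mu2 = (MeasureTheory.volume.restrict (Set.Ioc (0:ℝ) 2)).prod
    (MeasureTheory.volume.restrict (Set.Ioc (0:ℝ) 1)) from rfl]
  rw [MeasureTheory.integral_prod _ (by exact hint)]
  rw [intervalIntegral.integral_of_le (by norm_num : (0:ℝ) ≤ 2)]
  apply MeasureTheory.integral_congr_ae
  filter_upwards with s
  rw [intervalIntegral.integral_of_le (by norm_num : (0:ℝ) ≤ 1)]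
  apply MeasureTheory.integral_congr_ae
  filter_upwards with t
  rw [hwf s t, hpt s t]

end Final

/-- if the components of the (smooth, closed) magnetic field `B` belong to
`A^∞`, then every derivative `(∂_x^a ∂_y^b ∂_z^c Γ_B)(·,y,z)` belongs to `A`. -/
theorem gammaB_derivatives_in_A (n : ℕ) (A : Set (Vec n → ℂ))
    (hA : IsAdmissible n A) (B : Fin n → Fin n → Vec n → ℝ)
    (hBsmooth : ∀ j k, ContDiff ℝ (⊤ : ℕ∞) (B j k))
    (hBanti : ∀ j k (x : Vec n), B j k x = - B k j x)
    (hBclosed : ∀ j k l (x : Vec n),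
      pd (EuclideanSpace.single j (1 : ℝ)) (B k l) x +
        pd (EuclideanSpace.single k (1 : ℝ)) (B l j) x +
        pd (EuclideanSpace.single l (1 : ℝ)) (B j k) x = 0)
    (hBA : ∀ j k (a : Fin n → ℕ),
      (fun x => mpd (fun i => EuclideanSpace.single i (1 : ℝ)) a
        (fun y => ((B j k y : ℝ) : ℂ)) x) ∈ A)
    (Γ : Vec n × Vec n × Vec n → ℂ)
    (hΓ : ∀ x y z : Vec n, Γ (x, y, z) =
      ((∑ j, ∑ k, (y j * z k) *
        ∫ s in (0:ℝ)..2, ∫ t in (0:ℝ)..1,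
          s * B j k (x + (s - s * t - 1) • y + (s * t - 1) • z) : ℝ) : ℂ))
    (a b c : Fin n → ℕ) (y z : Vec n) :
    (fun x => dxyz a b c Γ (x, y, z)) ∈ A := by
  classical
  have hgood : ∀ j k, GoodFn A (B j k) := fun j k =>
    goodFn_of_hyp hA (hBsmooth j k) (hBA j k)
  set Γr : (Vec n × Vec n × Vec n) → ℝ := fun p => ∑ j, ∑ k,
    Mon (fun i => if i = j then 1 else 0) p.2.1 *
      Mon (fun i => if i = k then 1 else 0) p.2.2 * Elem 0 0 (B j k) p with hΓr
  have hΓrInC : InC A Γr := by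
    apply InC.finsetSum hA
    intro j _
    apply InC.finsetSum hA
    intro k _
    exact InC.elem _ _ _ _ _ (hgood j k)
  have hΓeq : Γ = fun p => ((Γr p : ℝ) : ℂ) := by
    funext p
    obtain ⟨x, y', z'⟩ := p
    rw [hΓ x y' z']
    congr 1
    rw [hΓr]
    apply Finset.sum_congr rfl
    intro j _
    apply Finset.sum_congr rfl
    intro k _
    rw [Mon_delta, Mon_delta, elem_eq_iint hA (hgood j k)]
  set La : List (Vec n × Vec n × Vec n) :=
    (List.finRange n).flatMap fun j => List.replicate (a j) (e1v n j) with hLa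
  set Lb : List (Vec n × Vec n × Vec n) :=
    (List.finRange n).flatMap fun j => List.replicate (b j) (e2v n j) with hLb
  set Lc : List (Vec n × Vec n × Vec n) :=
    (List.finRange n).flatMap fun j => List.replicate (c j) (e3v n j) with hLc
  have hdx : dxyz a b c Γ = pdVL (La ++ (Lb ++ Lc)) Γ := by
    unfold dxyz
    rw [mpd_eq_pdVL, mpd_eq_pdVL, mpd_eq_pdVL, pdVL_append, pdVL_append]
  have hdirs : ∀ v ∈ La ++ (Lb ++ Lc),
      (∃ j, v = e1v n j) ∨ (∃ j, v = e2v n j) ∨ (∃ j, v = e3v n j) := by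
    intro v hv
    rcases List.mem_append.1 hv with h | h
    · rcases List.mem_flatMap.1 h with ⟨j, _, hj⟩
      exact Or.inl ⟨j, List.eq_of_mem_replicate hj⟩
    rcases List.mem_append.1 h with h | h
    · rcases List.mem_flatMap.1 h with ⟨j, _, hj⟩
      exact Or.inr (Or.inl ⟨j, List.eq_of_mem_replicate hj⟩)
    · rcases List.mem_flatMap.1 h with ⟨j, _, hj⟩
      exact Or.inr (Or.inr ⟨j, List.eq_of_mem_replicate hj⟩)
  have main : ∀ (L : List (Vec n × Vec n × Vec n)),
      (∀ v ∈ L, (∃ j, v = e1v n j) ∨ (∃ j, v = e2v n j) ∨ (∃ j, v = e3v n j)) →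
      ∀ f, InC A f → InC A (pdVL L f) ∧
        pdVL L (fun p => ((f p : ℝ) : ℂ)) = fun p => ((pdVL L f p : ℝ) : ℂ) := by
    intro L
    induction L with
    | nil => intro _ f hf; exact ⟨hf, rfl⟩
    | cons v L ih =>
      intro hL f hf
      obtain ⟨h1, h2⟩ := ih (fun w hw => hL w (List.mem_cons_of_mem v hw)) f hf
      refine ⟨h1.pdc hA v (hL v (List.mem_cons_self)), ?_⟩
      rw [pdVL_cons, h2, pdVL_cons]
      funext x
      exact pd_ofReal _ v x
  obtain ⟨h1, h2⟩ := main _ hdirs Γr hΓrInC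
  have hfin : (fun x => dxyz a b c Γ (x, y, z))
      = fun x => ((pdVL (La ++ (Lb ++ Lc)) Γr (x, y, z) : ℝ) : ℂ) := by
    rw [hdx, hΓeq, h2]
  rw [hfin]
  exact h1.memA hA y z
end
end

section
/- Let ℭ be a C*-algebra and suppose Φ : {z ∈ ℂ : Im z ≠ 0} → ℭ is a map satisfying the resolvent identity Φ(z) − Φ(z') = (z − z') Φ(z) Φ(z') for all non-real z, z', the symmetry Φ(z)* = Φ(z̄), and the bound ‖Φ(z)‖ ≤ 1/|Im z|. Then there exists a unique C*-algebra morphism Φ̃ : C₀(ℝ) → ℭ such that Φ̃(r_z) = Φ(z) where r_z(λ) := (λ − z)^{−1}. -/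
open scoped ZeroAtInfty ContinuousMapZero
open Filter Topology Complex

/-!
Put `S = Φ(i)`. The resolvent identity at `(i, -i)` and `(-i, i)` together with
`Φ(i)* = Φ(-i)` give `S - S* = 2i S S* = 2i S* S`, so `S` is normal, and reading the relation
through the functional calculus puts its spectrum in the circle `K = {s | Im s = |s|²}`.
The map `t ↦ (t - i)⁻¹` identifies `ℝ ∪ {∞}` with `K` (with `∞ ↦ 0`), hence `C(K)₀` with
`C₀(ℝ)`, sending `id` to `r_i`. The functional calculus of `S` thus yields a morphism with
`r_i ↦ Φ(i)`, and any such morphism sends `r_z` to `Φ(z)`: both solve `X + (i - z) S X = S`,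
whose solution is unique because `Φ(z)` also solves `X + (i - z) X S = S`. Uniqueness holds
because `id` generates `C(K)₀` (Stone–Weierstrass).
-/

noncomputable section

lemma Complex.ofReal_sub_ne_zero {z : ℂ} (hz : z.im ≠ 0) (t : ℝ) : (t : ℂ) - z ≠ 0 :=
  sub_ne_zero.mpr fun h => hz (by simpa using congrArg im h.symm)

def ContinuousMapZero.precompZeroAtInfty {X Y R : Type*} [TopologicalSpace X]
    [TopologicalSpace Y] [Zero Y] [CommSemiring R] [StarRing R] [TopologicalSpace R]
    [IsTopologicalSemiring R] [ContinuousStar R] (φ : C(X, Y))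
    (hφ : Tendsto φ (cocompact X) (𝓝 0)) : C(Y, R)₀ →⋆ₙₐ[R] C₀(X, R) where
  toFun f :=
    { toFun := f ∘ φ
      continuous_toFun := f.continuous.comp φ.continuous
      zero_at_infty' := map_zero f ▸ (f.continuous.tendsto 0).comp hφ }
  map_smul' _ _ := rfl
  map_zero' := rfl
  map_add' _ _ := rfl
  map_mul' _ _ := rfl
  map_star' _ := rfl

lemma isStarNormal_of_sub_star_eq {K A : Type*} [Field K] [Ring A] [StarRing A] [Module K A]
    {a : A} {c : K} (hc : c ≠ 0) (h₁ : a - star a = c • (a * star a))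
    (h₂ : a - star a = c • (star a * a)) : IsStarNormal a :=
  ⟨smul_right_injective A hc (h₂.symm.trans h₁)⟩

lemma eq_of_add_smul_mul_eq {R S : Type*} [Semiring R] [NonUnitalRing S] [Module R S]
    [IsScalarTower R S S] [SMulCommClass R S S] {s x y : S} {c : R}
    (hx : x + c • (s * x) = s) (hy : y + c • (s * y) = s) (hy' : y + c • (y * s) = s) :
    x = y := by
  have hd : (x - y) + c • (s * (x - y)) = 0 :=
    calc (x - y) + c • (s * (x - y)) = (x + c • (s * x)) - (y + c • (s * y)) := by
          rw [mul_sub, smul_sub]; abel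
      _ = 0 := by rw [hx, hy, sub_self]
  have hsd : s * (x - y) = 0 :=
    calc s * (x - y) = (y + c • (y * s)) * (x - y) := by rw [hy']
      _ = y * ((x - y) + c • (s * (x - y))) := by
        rw [add_mul, smul_mul_assoc, mul_add, mul_smul_comm, mul_assoc]
      _ = 0 := by rw [hd, mul_zero]
  rwa [hsd, smul_zero, add_zero, sub_eq_zero] at hd

def resolventCircle : Set ℂ := Metric.sphere (I / 2) (1 / 2)

namespace resolventCircle

lemma mem_iff {s : ℂ} : s ∈ resolventCircle ↔ s.im = normSq s := by
  rw [resolventCircle, Metric.mem_sphere, dist_eq, ← sq_eq_sq₀ (norm_nonneg _) (by norm_num),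
    ← normSq_eq_norm_sq, normSq_apply, normSq_apply]
  simp only [sub_re, sub_im, div_ofNat_re, div_ofNat_im, I_re, I_im]
  constructor <;> intro h <;> nlinarith

instance : Fact ((0 : ℂ) ∈ resolventCircle) := ⟨by simp [mem_iff]⟩

instance : CompactSpace resolventCircle := isCompact_iff_compactSpace.mp (isCompact_sphere _ _)

lemma inv_ofReal_sub_I_mem (t : ℝ) : ((t : ℂ) - I)⁻¹ ∈ resolventCircle := by
  rw [mem_iff, inv_im, map_inv₀]
  simp [div_eq_mul_inv]

lemma inv_eq_ofReal_sub_I {s : ℂ} (hs : s ∈ resolventCircle) (h0 : s ≠ 0) :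
    s⁻¹ = ((s⁻¹.re : ℝ) : ℂ) - I := by
  have him : s.im ≠ 0 := mem_iff.mp hs ▸ normSq_eq_zero.not.mpr h0
  apply Complex.ext
  · simp
  · simp [inv_im, ← mem_iff.mp hs, him]

def resolventI : C(ℝ, resolventCircle) where
  toFun t := ⟨((t : ℂ) - I)⁻¹, inv_ofReal_sub_I_mem t⟩
  continuous_toFun := by
    refine Continuous.subtype_mk (Continuous.inv₀ ?_ (ofReal_sub_ne_zero (by simp))) _
    fun_prop

lemma resolventI_inv_re {s : resolventCircle} (h0 : s ≠ 0) : resolventI (s : ℂ)⁻¹.re = s := by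
  have h0' : (s : ℂ) ≠ 0 := fun h => h0 (Subtype.ext h)
  ext1
  simp only [resolventI, ContinuousMap.coe_mk]
  rw [← inv_eq_ofReal_sub_I s.2 h0', inv_inv]

lemma tendsto_resolventI_cocompact : Tendsto resolventI (cocompact ℝ) (𝓝 0) := by
  rw [tendsto_subtype_rng]
  refine tendsto_inv₀_cobounded.comp ?_
  rw [← tendsto_norm_atTop_iff_cobounded]
  refine tendsto_atTop_mono (fun t => ?_) tendsto_norm_cocompact_atTop
  simpa using abs_re_le_norm ((t : ℂ) - I)

lemma tendsto_inv_re_cocompact :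
    Tendsto (fun s : ℂ => s⁻¹.re) (𝓝[resolventCircle \ {0}] 0) (cocompact ℝ) := by
  rw [← Metric.cobounded_eq_cocompact, ← tendsto_norm_atTop_iff_cobounded]
  have h : Tendsto (fun s : ℂ => ‖s⁻¹‖ - 1) (𝓝[resolventCircle \ {0}] 0) atTop :=
    tendsto_atTop_add_const_right _ _ <|
      tendsto_norm_inv_nhdsNE_zero_atTop.mono_left (nhdsWithin_mono _ fun _ hs => hs.2)
  refine tendsto_atTop_mono' _ ?_ h
  filter_upwards [self_mem_nhdsWithin] with s ⟨hs, h0⟩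
  rw [inv_eq_ofReal_sub_I hs h0]
  simpa using norm_sub_le ((s⁻¹.re : ℝ) : ℂ) I

def extension (g : C₀(ℝ, ℂ)) (s : ℂ) : ℂ := if s = 0 then 0 else g s⁻¹.re

lemma continuousOn_extension (g : C₀(ℝ, ℂ)) : ContinuousOn (extension g) resolventCircle := by
  intro s hs
  by_cases h0 : s = 0
  · subst h0
    rw [← continuousWithinAt_sdiff_singleton, ContinuousWithinAt, extension, if_pos rfl]
    refine (g.zero_at_infty'.comp tendsto_inv_re_cocompact).congr' ?_
    filter_upwards [self_mem_nhdsWithin] with s ⟨_, h0⟩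
    simp [extension, Set.mem_singleton_iff.not.mp h0]
  · have hg : ContinuousAt (fun s : ℂ => g s⁻¹.re) s :=
      (g.continuous.comp continuous_re).continuousAt.comp (continuousAt_inv₀ h0)
    refine (hg.congr_of_eventuallyEq ?_).continuousWithinAt
    filter_upwards [eventually_ne_nhds h0] with s hs
    simp [extension, hs]

abbrev pullback : C(resolventCircle, ℂ)₀ →⋆ₙₐ[ℂ] C₀(ℝ, ℂ) :=
  ContinuousMapZero.precompZeroAtInfty resolventI tendsto_resolventI_cocompact

lemma pullback_injective : Function.Injective pullback := by
  refine (injective_iff_map_eq_zero pullback).mpr fun f hf => ContinuousMapZero.ext fun s => ?_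
  obtain rfl | h0 := eq_or_ne s 0
  · exact map_zero f
  · rw [← resolventI_inv_re h0]
    exact DFunLike.congr_fun hf _

lemma pullback_surjective : Function.Surjective pullback := by
  intro g
  refine ⟨⟨⟨resolventCircle.domRestrict (extension g), (continuousOn_extension g).domRestrict⟩,
    if_pos rfl⟩, ?_⟩
  ext t
  have ht : ((t : ℂ) - I)⁻¹ ≠ 0 := inv_ne_zero (ofReal_sub_ne_zero (by simp) t)
  change extension g ((t : ℂ) - I)⁻¹ = g t
  simp [extension, ht]

def pullbackEquiv : C(resolventCircle, ℂ)₀ ≃⋆ₐ[ℂ] C₀(ℝ, ℂ) :=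
  StarAlgEquiv.ofBijective pullback ⟨pullback_injective, pullback_surjective⟩

lemma pullbackEquiv_id_apply (t : ℝ) :
    pullbackEquiv (.id resolventCircle) t = ((t : ℂ) - I)⁻¹ := rfl

end resolventCircle

lemma spectrum_subset_resolventCircle {A : Type*} [CStarAlgebra A] {a : A} [IsStarNormal a]
    (h : a - star a = (2 * I) • (a * star a)) : spectrum ℂ a ⊆ resolventCircle := by
  intro s hs
  have hcfc : cfc (fun s : ℂ => s - star s - 2 * I * (s * star s)) a = cfc (0 : ℂ → ℂ) a := by
    rw [cfc_sub .., cfc_sub .., cfc_const_mul .., cfc_mul .., cfc_star_id a, cfc_id' ℂ a,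
      cfc_zero, h, sub_self]
  have hs' : s - star s = 2 * I * (s * star s) := by
    simpa [sub_eq_zero] using (eqOn_of_cfc_eq_cfc hcfc) hs
  rw [star_def, sub_conj, mul_conj] at hs'
  simpa [resolventCircle.mem_iff] using congrArg im hs'

lemma exists_nonUnitalStarAlgHom_apply_eq_of_sub_star_eq {A : Type*} [CStarAlgebra A] {a : A}
    (h₁ : a - star a = (2 * I) • (a * star a)) (h₂ : a - star a = (2 * I) • (star a * a)) :
    ∃ F : C₀(ℝ, ℂ) →⋆ₙₐ[ℂ] A, F (resolventCircle.pullbackEquiv (.id _)) = a := by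
  have ha := isStarNormal_of_sub_star_eq (by simp) h₁ h₂
  have hσ : quasispectrum ℂ a ⊆ resolventCircle := by
    rw [quasispectrum_eq_spectrum_union_zero]
    exact Set.union_subset (spectrum_subset_resolventCircle h₁)
      (Set.singleton_subset_iff.mpr Fact.out)
  refine ⟨(cfcₙHomSuperset ha hσ).comp (resolventCircle.pullbackEquiv.symm : _ →⋆ₙₐ[ℂ] _), ?_⟩
  change cfcₙHomSuperset ha hσ (resolventCircle.pullbackEquiv.symm
    (resolventCircle.pullbackEquiv (.id _))) = a
  rw [StarAlgEquiv.symm_apply_apply, cfcₙHomSuperset_id]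

lemma ZeroAtInftyContinuousMap.add_smul_mul_eq_of_eq_inv_sub {g h : C₀(ℝ, ℂ)} {z w : ℂ}
    (hz : z.im ≠ 0) (hw : w.im ≠ 0) (hg : ∀ t : ℝ, g t = ((t : ℂ) - z)⁻¹)
    (hh : ∀ t : ℝ, h t = ((t : ℂ) - w)⁻¹) : g + (w - z) • (h * g) = h := by
  ext t
  have := ofReal_sub_ne_zero hz t
  have := ofReal_sub_ne_zero hw t
  simp only [add_apply, smul_apply, mul_apply, hg, hh, smul_eq_mul]
  field_simp
  ring

lemma apply_eq_of_resolvent_identity {A F : Type*} [NonUnitalRing A] [Module ℂ A]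
    [IsScalarTower ℂ A A] [SMulCommClass ℂ A A] [FunLike F C₀(ℝ, ℂ) A]
    [NonUnitalAlgHomClass F ℂ C₀(ℝ, ℂ) A] (Φ : ℂ → A)
    (hres : ∀ z z' : ℂ, z.im ≠ 0 → z'.im ≠ 0 → Φ z - Φ z' = (z - z') • (Φ z * Φ z'))
    (φ : F) {gI : C₀(ℝ, ℂ)} (hgI : ∀ t : ℝ, gI t = ((t : ℂ) - I)⁻¹) (hφ : φ gI = Φ I)
    {z : ℂ} (hz : z.im ≠ 0) {g : C₀(ℝ, ℂ)} (hg : ∀ t : ℝ, g t = ((t : ℂ) - z)⁻¹) :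
    φ g = Φ z := by
  have hI : I.im ≠ 0 := by simp
  refine eq_of_add_smul_mul_eq (c := I - z) (s := Φ I) ?_ ?_ ?_
  · rw [← hφ, ← map_mul, ← map_smul, ← map_add,
      ZeroAtInftyContinuousMap.add_smul_mul_eq_of_eq_inv_sub hz hI hg hgI]
  · rw [← hres I z hI hz]
    abel
  · rw [← neg_sub z I, neg_smul, ← hres z I hz hI]
    abel

open scoped CStarAlgebra in
lemma ZeroAtInftyContinuousMap.nonUnitalStarAlgHom_ext_of_apply_eq {A : Type*}
    [NonUnitalCStarAlgebra A] {φ ψ : C₀(ℝ, ℂ) →⋆ₙₐ[ℂ] A} {g : C₀(ℝ, ℂ)}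
    (hg : ∀ t : ℝ, g t = ((t : ℂ) - I)⁻¹) (h : φ g = ψ g) : φ = ψ := by
  let _ : NonUnitalCStarAlgebra C(resolventCircle, ℂ)₀ := {}
  let e : C(resolventCircle, ℂ)₀ →⋆ₙₐ[ℂ] C₀(ℝ, ℂ) := resolventCircle.pullbackEquiv
  have he : e (.id resolventCircle) = g := ext fun t => (hg t).symm
  have hcomp : φ.comp e = ψ.comp e := by
    rw [DFunLike.ext'_iff, ← Set.eqOn_univ,
      ← (ContinuousMapZero.adjoin_id_dense resolventCircle).closure_eq]
    refine Set.EqOn.closure (fun f hf => ?_) (map_continuous _) (map_continuous _)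
    rw [← NonUnitalStarAlgHom.mem_equalizer]
    exact NonUnitalStarAlgebra.adjoin_le (Set.singleton_subset_iff.mpr (by simpa [he] using h)) hf
  ext f
  obtain ⟨f, rfl⟩ := resolventCircle.pullbackEquiv.surjective f
  exact DFunLike.congr_fun hcomp f

theorem affiliation_criterion_general {C : Type*} [NormedRing C] [StarRing C]
    [CStarRing C] [NormedAlgebra ℂ C] [CompleteSpace C] [StarModule ℂ C]
    (Φ : ℂ → C)
    (hres : ∀ z z' : ℂ, z.im ≠ 0 → z'.im ≠ 0 →
      Φ z - Φ z' = (z - z') • (Φ z * Φ z'))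
    (hstar : ∀ z : ℂ, z.im ≠ 0 → star (Φ z) = Φ (starRingEnd ℂ z)) :
    ∃! F : C₀(ℝ, ℂ) →⋆ₙₐ[ℂ] C,
      ∀ z : ℂ, z.im ≠ 0 → ∀ g : C₀(ℝ, ℂ),
        (∀ t : ℝ, g t = ((t : ℂ) - z)⁻¹) → F g = Φ z := by
  let _ : CStarAlgebra C := {}
  have hI : I.im ≠ 0 := by simp
  have hstarI : star (Φ I) = Φ (-I) := by rw [hstar I hI, conj_I]
  have h₁ : Φ I - star (Φ I) = (2 * I) • (Φ I * star (Φ I)) := by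
    rw [hstarI, hres I (-I) hI (by simp)]
    ring_nf
  have h₂ : Φ I - star (Φ I) = (2 * I) • (star (Φ I) * Φ I) := by
    rw [hstarI, ← neg_sub, hres (-I) I (by simp) hI, ← neg_smul]
    ring_nf
  obtain ⟨F, hF⟩ := exists_nonUnitalStarAlgHom_apply_eq_of_sub_star_eq h₁ h₂
  have hgI := resolventCircle.pullbackEquiv_id_apply
  refine ⟨F, fun z hz g hg => apply_eq_of_resolvent_identity Φ hres F hgI hF hz hg,
    fun F' hF' => ?_⟩
  exact ZeroAtInftyContinuousMap.nonUnitalStarAlgHom_ext_of_apply_eq hgI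
    (by rw [hF' I hI _ hgI, hF])

/-- abstract affiliation criterion: a resolvent-like family
`Φ(z)`, `Im z ≠ 0`, in a C*-algebra `C` satisfying the resolvent identity, the symmetry
`Φ(z)* = Φ(z̄)` and `‖Φ(z)‖ ≤ 1/|Im z|` extends uniquely to a morphism
`C₀(ℝ) → C` sending `r_z = (· − z)⁻¹` to `Φ(z)`. -/
theorem affiliation_criterion {C : Type*} [NormedRing C] [StarRing C]
    [CStarRing C] [NormedAlgebra ℂ C] [CompleteSpace C] [StarModule ℂ C]
    (Φ : ℂ → C)
    (hres : ∀ z z' : ℂ, z.im ≠ 0 → z'.im ≠ 0 →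
      Φ z - Φ z' = (z - z') • (Φ z * Φ z'))
    (hstar : ∀ z : ℂ, z.im ≠ 0 → star (Φ z) = Φ (starRingEnd ℂ z))
    (hbound : ∀ z : ℂ, z.im ≠ 0 → ‖Φ z‖ ≤ 1 / |z.im|) :
    ∃! F : C₀(ℝ, ℂ) →⋆ₙₐ[ℂ] C,
      ∀ z : ℂ, z.im ≠ 0 → ∀ g : C₀(ℝ, ℂ),
        (∀ t : ℝ, g t = ((t : ℂ) - z)⁻¹) → F g = Φ z :=
  affiliation_criterion_general Φ hres hstar
end
end
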